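/- arXiv:1711.00620 — 2 statements merged into one kernel-verified Lean document; each statement's English description precedes it below -/
import Mathlib

section
/- Non-degeneracy of the phase: let 0 < r < 1 and p(ξ) = arccos(r cos ξ). Then for every ξ ∈ ℝ, ((1+2r²)/(1−r²))² p''(ξ)² + p'''(ξ)² ≥ r²(1−r²)². In particular p''(ξ) and p'''(ξ) never vanish simultaneously, so min_{ξ∈𝕋} max(|p''(ξ)|, |p'''(ξ)|) > 0. -/
noncomputable section

open Filter MeasureTheory
open scoped BigOperators ComplexConjugate

/-- The state space component `ℂ²`. -/
abbrev C2 := EuclideanSpace ℂ (Fin 2)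

/-- Operator norm of a `2 × 2` complex matrix acting on `ℂ²`. -/
def matOpNorm (M : Matrix (Fin 2) (Fin 2) ℂ) : ℝ :=
  ‖Matrix.toEuclideanCLM (𝕜 := ℂ) M‖

/-- The vector `(z, w)ᵗ ∈ ℂ²`. -/
def vec2 (z w : ℂ) : C2 := (WithLp.equiv 2 (Fin 2 → ℂ)).symm ![z, w]

/-- Apply a `2 × 2` matrix to a vector in `ℂ²`. -/
def applyMat (M : Matrix (Fin 2) (Fin 2) ℂ) (v : C2) : C2 :=
  Matrix.toEuclideanCLM (𝕜 := ℂ) M v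

/-- The `ℓ^p` norm of a state `u : ℤ → ℂ²`. -/
def lpNorm (p : ℝ) (u : ℤ → C2) : ℝ := (∑' x : ℤ, ‖u x‖ ^ p) ^ (1/p)

/-- The `ℓ^∞` norm of a state. -/
def linfNorm (u : ℤ → C2) : ℝ := ⨆ x : ℤ, ‖u x‖

/-- The constant coin matrix `C₀`. -/
def C0mat (a b : ℂ) : Matrix (Fin 2) (Fin 2) ℂ :=
  !![a, b; -(starRingEnd ℂ) b, (starRingEnd ℂ) a]

/-- The shift `S`: `(Su)(x) = (u₁(x+1), u₂(x−1))ᵗ`. -/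
def shiftS (u : ℤ → C2) : ℤ → C2 := fun x => vec2 (u (x+1) 0) (u (x-1) 1)

/-- The (nonlinear) coin operator `Ĉ`: `(Ĉu)(x) = C(|u₁(x)|², |u₂(x)|²) u(x)`. -/
def coinApply (C : ℝ → ℝ → Matrix (Fin 2) (Fin 2) ℂ) (u : ℤ → C2) : ℤ → C2 :=
  fun x => applyMat (C (‖u x 0‖^2) (‖u x 1‖^2)) (u x)

/-- One step of a quantum walk with coin map `C`: `U = S ∘ Ĉ`. -/
def genStep (C : ℝ → ℝ → Matrix (Fin 2) (Fin 2) ℂ) (u : ℤ → C2) : ℤ → C2 :=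
  shiftS (coinApply C u)

/-- The `t`-step evolution of a quantum walk with coin map `C`. -/
def genEvolve (C : ℝ → ℝ → Matrix (Fin 2) (Fin 2) ℂ) (t : ℕ) (u0 : ℤ → C2) : ℤ → C2 :=
  (genStep C)^[t] u0

/-- One step of the linear walk `U₀ = S ∘ Ĉ₀`. -/
def U0step (a b : ℂ) : (ℤ → C2) → (ℤ → C2) := genStep (fun _ _ => C0mat a b)

/-- The linear evolution `U₀ᵗ`. -/
def linEvolve (a b : ℂ) (t : ℕ) (u0 : ℤ → C2) : ℤ → C2 := (U0step a b)^[t] u0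

/-- The inverse linear step `U₀⁻¹ = Ĉ₀⁻¹ ∘ S⁻¹`. -/
def U0inv (a b : ℂ) (u : ℤ → C2) : ℤ → C2 :=
  fun x => applyMat (Matrix.conjTranspose (C0mat a b)) (vec2 (u (x-1) 0) (u (x+1) 1))

/-- The full nonlinear coin `C(s₁,s₂) = C₀ · C_N(s₁,s₂)`. -/
def nlCoin (a b : ℂ) (CN : ℝ → ℝ → Matrix (Fin 2) (Fin 2) ℂ) :
    ℝ → ℝ → Matrix (Fin 2) (Fin 2) ℂ :=
  fun s₁ s₂ => C0mat a b * CN s₁ s₂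

/-- The nonlinear quantum walk `U(t)u₀` with coin `C = C₀ C_N`. -/
def nlEvolve (a b : ℂ) (CN : ℝ → ℝ → Matrix (Fin 2) (Fin 2) ℂ) (t : ℕ) (u0 : ℤ → C2) :
    ℤ → C2 :=
  genEvolve (nlCoin a b CN) t u0

/-- `U(t)u₀` scatters: there is `u₊ ∈ ℓ²` with `‖U(t)u₀ − U₀ᵗu₊‖_{ℓ²} → 0`. -/
def scatters (a b : ℂ) (CN : ℝ → ℝ → Matrix (Fin 2) (Fin 2) ℂ) (u0 : ℤ → C2) : Prop :=
  ∃ uplus : ℤ → C2, Summable (fun x => ‖uplus x‖ ^ (2:ℝ)) ∧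
    Tendsto (fun t : ℕ =>
        lpNorm 2 (fun x => nlEvolve a b CN t u0 x - linEvolve a b t uplus x))
      atTop (nhds 0)

/-- Japanese bracket `⟨t⟩ = (1+t²)^{1/2}`. -/
def jap (t : ℕ) : ℝ := Real.sqrt (1 + (t:ℝ)^2)

/-- Discrete Fourier transform `(Fu)(ξ) = Σ_x e^{−ixξ} u(x)`. -/
def dFourier (u : ℤ → C2) (ξ : ℝ) : C2 :=
  ∑' x : ℤ, Complex.exp (-(Complex.I) * (x:ℂ) * (ξ:ℂ)) • u x

/-- `w(ξ) = Re(e^{iξ}a)`. -/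
def wfun (a : ℂ) (ξ : ℝ) : ℝ := (Complex.exp (Complex.I * (ξ:ℂ)) * a).re

/-- `λ₊(ξ) = w(ξ) + i√(1−w(ξ)²)`. -/
def lamPlus (a : ℂ) (ξ : ℝ) : ℂ :=
  (wfun a ξ : ℂ) + Complex.I * ((Real.sqrt (1 - (wfun a ξ)^2) : ℝ) : ℂ)

/-- `λ₋(ξ) = w(ξ) − i√(1−w(ξ)²)`. -/
def lamMinus (a : ℂ) (ξ : ℝ) : ℂ :=
  (wfun a ξ : ℂ) - Complex.I * ((Real.sqrt (1 - (wfun a ξ)^2) : ℝ) : ℂ)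

/-- The diagonalizing matrix `P(ξ)`. -/
def Pmat (a b : ℂ) (ξ : ℝ) : Matrix (Fin 2) (Fin 2) ℂ :=
  (((‖b‖^2 + ‖Complex.exp (Complex.I * (ξ:ℂ)) * a - lamPlus a ξ‖^2 : ℝ) : ℂ))⁻¹ •
    !![ -Complex.exp (-(Complex.I) * (ξ:ℂ)) * (starRingEnd ℂ) b,
          -Complex.exp (-(Complex.I) * (ξ:ℂ)) * a + lamMinus a ξ;
        -Complex.exp (Complex.I * (ξ:ℂ)) * a + lamPlus a ξ,
          -Complex.exp (Complex.I * (ξ:ℂ)) * b ]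

/-- `Q₊(ξ)` (for `sgn = true`) and `Q₋(ξ)` (for `sgn = false`). -/
def Qpm (a b : ℂ) (sgn : Bool) (ξ : ℝ) : Matrix (Fin 2) (Fin 2) ℂ :=
  (Pmat a b (ξ - Complex.arg a))⁻¹ *
    (if sgn then !![1,0;0,0] else !![0,0;0,1]) * Pmat a b (ξ - Complex.arg a)

/-- `p(ξ) = arccos(|a| cos ξ)`. -/
def pfun (a : ℂ) (ξ : ℝ) : ℝ := Real.arccos (‖a‖ * Real.cos ξ)

/-- `p'(ξ) = |a| sin ξ / √(1 − |a|² cos² ξ)`. -/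
def pderiv (a : ℂ) (ξ : ℝ) : ℝ :=
  ‖a‖ * Real.sin ξ / Real.sqrt (1 - ‖a‖^2 * (Real.cos ξ)^2)

/-- The Konno function `f_K(v;r)`. -/
def konno (r v : ℝ) : ℝ :=
  if |v| < r then Real.sqrt (1 - r^2) / (Real.pi * (1 - v^2) * Real.sqrt (r^2 - v^2)) else 0

/-- `ξ_{±,m}(v) = mπ + arcsin(∓(−1)^m |b| v /(|a|√(1−v²)))`; `sgn = true` is `+`. -/
def xiPM (a b : ℂ) (sgn : Bool) (m : ℕ) (v : ℝ) : ℝ :=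
  m * Real.pi +
    Real.arcsin (((if sgn then (-1:ℝ) else 1) * (-1)^m * ‖b‖ * v) / (‖a‖ * Real.sqrt (1 - v^2)))

/-- `P_{±,m}(ξ) = ⟨û₊(ξ−θ_a), Q_±(ξ) û₊(ξ−θ_a)⟩_{ℂ²}`. -/
def PpmVal (a b : ℂ) (uplus : ℤ → C2) (sgn : Bool) (ξ : ℝ) : ℂ :=
  @inner ℂ _ _ (dFourier uplus (ξ - Complex.arg a))
    (applyMat (Qpm a b sgn ξ) (dFourier uplus (ξ - Complex.arg a)))

/-- The weight `w(v)` determined by `u₊`. -/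
def wWeight (a b : ℂ) (uplus : ℤ → C2) (v : ℝ) : ℝ :=
  ((1/2 : ℂ) *
    ((PpmVal a b uplus false (xiPM a b false 0 v) + PpmVal a b uplus false (xiPM a b false 1 v)) +
     (PpmVal a b uplus true (xiPM a b true 0 v) + PpmVal a b uplus true (xiPM a b true 1 v)))).re

/-- The symbol of the asymptotic-velocity multiplier `e^{iξ₀v̂₀}`. -/
def velMultM (a b : ℂ) (ξ0 ξ : ℝ) : Matrix (Fin 2) (Fin 2) ℂ :=
  (Pmat a b ξ)⁻¹ *
    !![Complex.exp (-(Complex.I) * (ξ0:ℂ) * (pderiv a (ξ + Complex.arg a) : ℝ)), 0;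
       0, Complex.exp (Complex.I * (ξ0:ℂ) * (pderiv a (ξ + Complex.arg a) : ℝ))] * Pmat a b ξ

/-- The Fourier multiplier operator `e^{iξ₀v̂₀} = F⁻¹ P⁻¹ diag(e^{∓iξ₀p'}) P F`. -/
def velMult (a b : ℂ) (ξ0 : ℝ) (u : ℤ → C2) : ℤ → C2 := fun x =>
  (2 * Real.pi)⁻¹ •
    ∫ ξ in (0:ℝ)..(2 * Real.pi),
      Complex.exp (Complex.I * (x:ℂ) * (ξ:ℂ)) • applyMat (velMultM a b ξ0 ξ) (dFourier u ξ)

/-- The oscillatory-integral kernel `I_{±,ij}(t,s)`; `sgn = true` is `+`. -/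
def Ikernel (a b : ℂ) (sgn : Bool) (t s : ℝ) (i j : Fin 2) : ℂ :=
  (2 * Real.pi)⁻¹ *
    ∫ ξ in (0:ℝ)..(2 * Real.pi),
      Complex.exp (Complex.I *
        ((t * ((if sgn then pfun a ξ else -pfun a ξ) + s * (ξ - Complex.arg a)) : ℝ) : ℂ)) *
        (Qpm a b sgn ξ i j)

/-- Inner product of `ℋ`, linear in the FIRST argument (as used in Section 4). -/
def herm (u v : ℤ → C2) : ℂ := ∑' x : ℤ, @inner ℂ _ _ (v x) (u x)

/-- The state `δ_{j,x₀}`. -/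
def deltaState (j : Fin 2) (x0 : ℤ) : ℤ → C2 :=
  fun x => if x = x0 then EuclideanSpace.single j (1:ℂ) else 0

/-- `(Ĉ_N − I)u`. -/
def coinDiff (CN : ℝ → ℝ → Matrix (Fin 2) (Fin 2) ℂ) (u : ℤ → C2) : ℤ → C2 :=
  fun x => coinApply CN u x - u x

/-- The wave operator `W* u₀ = u₀ + Σ_{t≥0} U₀^{−t}(Ĉ_N − I)U(t)u₀`. -/
def waveOp (a b : ℂ) (CN : ℝ → ℝ → Matrix (Fin 2) (Fin 2) ℂ) (u0 : ℤ → C2) : ℤ → C2 :=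
  fun x => u0 x + ∑' t : ℕ, ((U0inv a b)^[t] (coinDiff CN (nlEvolve a b CN t u0))) x

/-- The operator `U₀⁻¹ W* U₀ − W*`. -/
def scatOp (a b : ℂ) (CN : ℝ → ℝ → Matrix (Fin 2) (Fin 2) ℂ) (u0 : ℤ → C2) : ℤ → C2 :=
  fun x => U0inv a b (waveOp a b CN (U0step a b u0)) x - waveOp a b CN u0 x

/-- `ℒ_{(i+1)(j+1)}(λ)`. -/
def Lcal (a b : ℂ) (CN : ℝ → ℝ → Matrix (Fin 2) (Fin 2) ℂ) (i j : Fin 2) (lam : ℝ) : ℂ :=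
  ((lam:ℂ)^(10:ℕ))⁻¹ *
    herm (scatOp a b CN (fun x => if x = 0 then
      (if i = 0 then vec2 ((lam:ℂ)^2) ((lam:ℂ)^3) else vec2 ((lam:ℂ)^3) ((lam:ℂ)^2)) else 0))
      (deltaState j 0)

/-- `D_λ g(λ) = λ⁻¹(g(2λ) − g(λ))`. -/
def Dlam (g : ℝ → ℂ) (lam : ℝ) : ℂ := ((lam:ℂ))⁻¹ * (g (2*lam) - g lam)

/-- `l¹_t l²_x` norm. -/
def l1l2 (F : ℕ → ℤ → C2) : ℝ := ∑' t : ℕ, lpNorm 2 (F t)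

/-- `l^{6/5}_t l¹_x` norm. -/
def l65l1 (F : ℕ → ℤ → C2) : ℝ := (∑' t : ℕ, lpNorm 1 (F t) ^ ((6:ℝ)/5)) ^ ((5:ℝ)/6)

/-- `l⁶_t l^∞_x` norm. -/
def l6linf (F : ℕ → ℤ → C2) : ℝ := (∑' t : ℕ, linfNorm (F t) ^ (6:ℝ)) ^ ((1:ℝ)/6)

/-- `l^∞_t l²_x` norm. -/
def linfl2 (F : ℕ → ℤ → C2) : ℝ := ⨆ t : ℕ, lpNorm 2 (F t)

/-- The Strichartz norm `‖F‖_{Stz} = max(‖F‖_{l^∞l²}, ‖F‖_{l⁶l^∞})`. -/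
def StzNorm (F : ℕ → ℤ → C2) : ℝ := max (linfl2 F) (l6linf F)

/-- The retarded sum `Σ_{s=0}^t U₀^{t−s} f(s)`. -/
def retSum (a b : ℂ) (f : ℕ → ℤ → C2) (t : ℕ) : ℤ → C2 :=
  fun x => ∑ s ∈ Finset.range (t+1), linEvolve a b (t - s) (f s) x

/-- The rotation matrix `R(θ)`. -/
def rotMat (θ : ℝ) : Matrix (Fin 2) (Fin 2) ℂ :=
  !![((Real.cos θ : ℝ) : ℂ), -((Real.sin θ : ℝ) : ℂ);
     ((Real.sin θ : ℝ) : ℂ), ((Real.cos θ : ℝ) : ℂ)]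

/-!
Writing `D = 1 - r² cos² ξ ≤ 1`, `p''` and `p'''` are `r(1 - r²) cos ξ` and
`-r(1 - r²)(1 + 2r² cos² ξ) sin ξ` divided by `D^{3/2}` and `D^{5/2}`. Dropping the denominators
and the factors `(1 + 2r²)/(1 - r²) ≥ 1` and `1 + 2r² cos² ξ ≥ 1` only decreases the left-hand
side, which leaves `r²(1 - r²)² (cos² ξ + sin² ξ)`. The bound on `max (|p''|, |p'''|)` follows
from `a² x² + y² ≤ (a² + 1) max (|x|, |y|)²`.
-/

open Real

theorem sq_le_sq_div_pow (x : ℝ) {t : ℝ} (n : ℕ) (ht0 : 0 < t) (ht1 : t ≤ 1) :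
    x ^ 2 ≤ (x / t ^ n) ^ 2 := by
  rw [div_pow, ← pow_mul]
  exact le_div_self (sq_nonneg x) (by positivity) (pow_le_one₀ ht0.le ht1)

theorem sqrt_div_le_max_abs {a K x y : ℝ} (h : K ≤ a ^ 2 * x ^ 2 + y ^ 2) :
    √(K / (a ^ 2 + 1)) ≤ max |x| |y| := by
  have hx : x ^ 2 ≤ max |x| |y| ^ 2 := by
    rw [← sq_abs x]; gcongr; exact le_max_left _ _
  have hy : y ^ 2 ≤ max |x| |y| ^ 2 := by
    rw [← sq_abs y]; gcongr; exact le_max_right _ _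
  rw [sqrt_le_left (le_max_of_le_left (abs_nonneg x)), div_le_iff₀ (by positivity)]
  nlinarith [mul_le_mul_of_nonneg_left hx (sq_nonneg a)]

section ArccosMulCos

variable {r : ℝ}

theorem one_sub_sq_mul_cos_sq_pos (hr : |r| < 1) (ξ : ℝ) : 0 < 1 - r ^ 2 * cos ξ ^ 2 := by
  have hr2 : r ^ 2 < 1 := (sq_lt_one_iff_abs_lt_one r).2 hr
  nlinarith [cos_sq_le_one ξ, sq_nonneg r]

theorem sqrt_one_sub_sq_mul_cos_sq_le_one (ξ : ℝ) : √(1 - r ^ 2 * cos ξ ^ 2) ≤ 1 :=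
  sqrt_le_one.2 (by nlinarith [sq_nonneg (r * cos ξ)])

theorem hasDerivAt_arccos_mul_cos (hr : |r| < 1) (ξ : ℝ) :
    HasDerivAt (fun ζ => arccos (r * cos ζ)) (r * sin ξ / √(1 - r ^ 2 * cos ξ ^ 2)) ξ := by
  have hD := one_sub_sq_mul_cos_sq_pos hr ξ
  have habs : |r * cos ξ| < 1 := by
    rw [← sq_lt_one_iff_abs_lt_one]; linarith [mul_pow r (cos ξ) 2]
  have h := (hasDerivAt_arccos (abs_lt.1 habs).1.ne' (abs_lt.1 habs).2.ne).comp ξ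
    ((hasDerivAt_cos ξ).const_mul r)
  refine h.congr_deriv ?_
  rw [mul_pow]
  field_simp

theorem hasDerivAt_sqrt_one_sub_sq_mul_cos_sq (hr : |r| < 1) (ξ : ℝ) :
    HasDerivAt (fun ζ => √(1 - r ^ 2 * cos ζ ^ 2))
      (r ^ 2 * cos ξ * sin ξ / √(1 - r ^ 2 * cos ξ ^ 2)) ξ := by
  have h := ((((hasDerivAt_cos ξ).pow 2).const_mul (r ^ 2)).const_sub 1).sqrt
    (one_sub_sq_mul_cos_sq_pos hr ξ).ne'
  refine h.congr_deriv ?_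
  simp only [Pi.pow_apply]
  field_simp
  ring

theorem hasDerivAt_deriv_arccos_mul_cos (hr : |r| < 1) (ξ : ℝ) :
    HasDerivAt (fun ζ => r * sin ζ / √(1 - r ^ 2 * cos ζ ^ 2))
      (r * (1 - r ^ 2) * cos ξ / √(1 - r ^ 2 * cos ξ ^ 2) ^ 3) ξ := by
  have hD := one_sub_sq_mul_cos_sq_pos hr ξ
  have h := ((hasDerivAt_sin ξ).const_mul r).div (hasDerivAt_sqrt_one_sub_sq_mul_cos_sq hr ξ)
    (sqrt_pos.2 hD).ne'
  refine h.congr_deriv (Eq.symm ?_)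
  have hs2 : √(1 - r ^ 2 * cos ξ ^ 2) ^ 2 = 1 - r ^ 2 * cos ξ ^ 2 := sq_sqrt hD.le
  field_simp
  linear_combination (-r * cos ξ) * hs2 + (r ^ 3 * cos ξ) * sin_sq_add_cos_sq ξ

theorem hasDerivAt_deriv_deriv_arccos_mul_cos (hr : |r| < 1) (ξ : ℝ) :
    HasDerivAt (fun ζ => r * (1 - r ^ 2) * cos ζ / √(1 - r ^ 2 * cos ζ ^ 2) ^ 3)
      (-(r * (1 - r ^ 2) * (1 + 2 * r ^ 2 * cos ξ ^ 2) * sin ξ) /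
        √(1 - r ^ 2 * cos ξ ^ 2) ^ 5) ξ := by
  have hD := one_sub_sq_mul_cos_sq_pos hr ξ
  have h := ((hasDerivAt_cos ξ).const_mul (r * (1 - r ^ 2))).div
    ((hasDerivAt_sqrt_one_sub_sq_mul_cos_sq hr ξ).pow 3) (pow_ne_zero 3 (sqrt_pos.2 hD).ne')
  refine h.congr_deriv (Eq.symm ?_)
  have hs2 : √(1 - r ^ 2 * cos ξ ^ 2) ^ 2 = 1 - r ^ 2 * cos ξ ^ 2 := sq_sqrt hD.le
  simp only [Pi.pow_apply]
  field_simp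
  linear_combination (r * (1 - r ^ 2) * sin ξ * √(1 - r ^ 2 * cos ξ ^ 2) ^ 2) * hs2

theorem iteratedDeriv_two_arccos_mul_cos (hr : |r| < 1) :
    iteratedDeriv 2 (fun ζ => arccos (r * cos ζ)) =
      fun ξ => r * (1 - r ^ 2) * cos ξ / √(1 - r ^ 2 * cos ξ ^ 2) ^ 3 := by
  rw [iteratedDeriv_succ, iteratedDeriv_one,
    funext fun ξ => (hasDerivAt_arccos_mul_cos hr ξ).deriv]
  exact funext fun ξ => (hasDerivAt_deriv_arccos_mul_cos hr ξ).deriv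

theorem iteratedDeriv_three_arccos_mul_cos (hr : |r| < 1) :
    iteratedDeriv 3 (fun ζ => arccos (r * cos ζ)) =
      fun ξ => -(r * (1 - r ^ 2) * (1 + 2 * r ^ 2 * cos ξ ^ 2) * sin ξ) /
        √(1 - r ^ 2 * cos ξ ^ 2) ^ 5 := by
  rw [iteratedDeriv_succ, iteratedDeriv_two_arccos_mul_cos hr]
  exact funext fun ξ => (hasDerivAt_deriv_deriv_arccos_mul_cos hr ξ).deriv

theorem le_sq_mul_iteratedDeriv_two_add_sq_iteratedDeriv_three_arccos_mul_cos (hr : |r| < 1)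
    {a : ℝ} (ha : 1 ≤ a) (ξ : ℝ) :
    r ^ 2 * (1 - r ^ 2) ^ 2 ≤
      a ^ 2 * iteratedDeriv 2 (fun ζ => arccos (r * cos ζ)) ξ ^ 2 +
        iteratedDeriv 3 (fun ζ => arccos (r * cos ζ)) ξ ^ 2 := by
  rw [iteratedDeriv_two_arccos_mul_cos hr, iteratedDeriv_three_arccos_mul_cos hr]
  have hs0 := sqrt_pos.2 (one_sub_sq_mul_cos_sq_pos hr ξ)
  have hs1 := sqrt_one_sub_sq_mul_cos_sq_le_one (r := r) ξ
  set k := r * (1 - r ^ 2)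
  have h2 := sq_le_sq_div_pow (k * cos ξ) 3 hs0 hs1
  have h3 := sq_le_sq_div_pow (-(k * (1 + 2 * r ^ 2 * cos ξ ^ 2) * sin ξ)) 5 hs0 hs1
  have hc : (k * cos ξ) ^ 2 ≤ a ^ 2 * (k * cos ξ) ^ 2 :=
    le_mul_of_one_le_left (sq_nonneg _) (one_le_pow₀ ha)
  have hs : (k * sin ξ) ^ 2 ≤ (-(k * (1 + 2 * r ^ 2 * cos ξ ^ 2) * sin ξ)) ^ 2 := by
    rw [show (-(k * (1 + 2 * r ^ 2 * cos ξ ^ 2) * sin ξ)) ^ 2 =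
      (k * sin ξ) ^ 2 * (1 + 2 * r ^ 2 * cos ξ ^ 2) ^ 2 by ring]
    exact le_mul_of_one_le_right (sq_nonneg _) (one_le_pow₀ (le_add_of_nonneg_right (by positivity)))
  have hk : r ^ 2 * (1 - r ^ 2) ^ 2 = (k * cos ξ) ^ 2 + (k * sin ξ) ^ 2 := by
    linear_combination (-k ^ 2) * sin_sq_add_cos_sq ξ
  nlinarith [mul_le_mul_of_nonneg_left h2 (sq_nonneg a)]

end ArccosMulCos

/-- non-degeneracy of the phase `p(ξ) = arccos(r cos ξ)`:
`((1+2r²)/(1−r²))² p''(ξ)² + p'''(ξ)² ≥ r²(1−r²)²`, so `p''` and `p'''` never vanish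
simultaneously, and `max(|p''|,|p'''|)` is bounded below by a positive constant. -/
theorem phase_nondegeneracy (r : ℝ) (hr0 : 0 < r) (hr1 : r < 1) :
    (∀ ξ : ℝ,
      ((1 + 2*r^2)/(1 - r^2))^2 *
          (iteratedDeriv 2 (fun ζ : ℝ => Real.arccos (r * Real.cos ζ)) ξ)^2 +
        (iteratedDeriv 3 (fun ζ : ℝ => Real.arccos (r * Real.cos ζ)) ξ)^2 ≥
      r^2 * (1 - r^2)^2) ∧
    ∃ c > (0:ℝ), ∀ ξ : ℝ,
      c ≤ max |iteratedDeriv 2 (fun ζ : ℝ => Real.arccos (r * Real.cos ζ)) ξ|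
              |iteratedDeriv 3 (fun ζ : ℝ => Real.arccos (r * Real.cos ζ)) ξ| := by
  have hr : |r| < 1 := abs_lt.2 ⟨by linarith, hr1⟩
  have hr2 : 0 < 1 - r ^ 2 := by nlinarith
  have ha : 1 ≤ (1 + 2 * r ^ 2) / (1 - r ^ 2) := by
    rw [one_le_div hr2]; nlinarith
  have hbound := le_sq_mul_iteratedDeriv_two_add_sq_iteratedDeriv_three_arccos_mul_cos hr ha
  refine ⟨hbound, _, sqrt_pos.2 (by positivity), fun ξ => sqrt_div_le_max_abs (hbound ξ)⟩
end
end

section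
/- Explicit traveling-wave (soliton) solution: let p ≥ 1 be an integer, g < 0, and a > 0 satisfy π/4 + g·a^{2p} = 0. For the nonlinear quantum walk with coin C(s₁,s₂) = R(π/4 + g(s₁+s₂)^p), define φ(t) ∈ l²(ℤ;ℂ²) by φ(t,x) = (a,0)ᵗ if x = −t and φ(t,x) = (0,0)ᵗ otherwise. Then φ(t) = U φ(t−1) for every integer t ≥ 1; that is, U(t)φ(0) = φ(t) for all t ≥ 0, so the walk started at φ(0) is an exact traveling wave of velocity −1 with ‖U(t)φ(0)‖_{l^∞} = a for all t. -/
noncomputable section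

open Filter MeasureTheory
open scoped BigOperators ComplexConjugate

/- The soliton sits where `C` is the identity: the resonance condition `π/4 + g a^{2p} = 0`
makes the coin angle vanish at the one occupied site, and the empty sites are fixed by any
matrix, so `Ĉ` acts trivially and `S` just moves the upper component one site to the left. -/

lemma rotMat_zero : rotMat 0 = 1 := by
  simp [rotMat, Matrix.one_fin_two]

lemma applyMat_one (v : C2) : applyMat 1 v = v := by
  simp [applyMat]

lemma vec2_apply_zero (z w : ℂ) : vec2 z w 0 = z := rfl

lemma vec2_apply_one (z w : ℂ) : vec2 z w 1 = w := rfl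

lemma vec2_zero_zero : vec2 0 0 = 0 := by
  ext i; fin_cases i <;> rfl

lemma norm_vec2_zero_right (z : ℂ) : ‖vec2 z 0‖ = ‖z‖ := by
  simp [EuclideanSpace.norm_eq, Fin.sum_univ_two, vec2_apply_zero, vec2_apply_one]

lemma coinApply_ite (C : ℝ → ℝ → Matrix (Fin 2) (Fin 2) ℂ) (c : ℤ) (v : C2) :
    coinApply C (fun x => if x = c then v else 0) =
      fun x => if x = c then applyMat (C (‖v 0‖ ^ 2) (‖v 1‖ ^ 2)) v else 0 := by
  funext x
  by_cases hx : x = c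
  · simp [coinApply, hx]
  · simp [coinApply, hx, applyMat]

lemma shiftS_ite_vec2_zero_right (c : ℤ) (z : ℂ) :
    shiftS (fun x => if x = c then vec2 z 0 else 0) =
      fun x => if x = c - 1 then vec2 z 0 else 0 := by
  funext x
  have hlower : (if x - 1 = c then vec2 z 0 else 0 : C2) 1 = 0 := by
    split_ifs <;> rfl
  by_cases hx : x = c - 1
  · rw [shiftS, hlower, if_pos (by omega : x + 1 = c), if_pos hx, vec2_apply_zero]
  · rw [shiftS, hlower, if_neg (by omega : x + 1 ≠ c), if_neg hx]
    exact vec2_zero_zero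

lemma iterate_apply_of_forall_apply_eq_sub_one {α : Type*} (f : α → α) (φ : ℤ → α)
    (hf : ∀ c, f (φ c) = φ (c - 1)) (c : ℤ) (t : ℕ) : f^[t] (φ c) = φ (c - t) := by
  induction t with
  | zero => simp
  | succ n ih =>
    rw [Function.iterate_succ_apply', ih, hf, Nat.cast_succ, sub_sub]

lemma linfNorm_ite (c : ℤ) (v : C2) : linfNorm (fun x => if x = c then v else 0) = ‖v‖ := by
  unfold linfNorm
  have hle : ∀ x, ‖(if x = c then v else 0 : C2)‖ ≤ ‖v‖ := fun x => by
    split_ifs <;> simp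
  refine le_antisymm (ciSup_le hle) ?_
  simpa using le_ciSup ⟨‖v‖, Set.forall_mem_range.2 hle⟩ c

lemma genStep_soliton (p : ℕ) (g a : ℝ) (ha : 0 < a) (hres : Real.pi / 4 + g * a ^ (2 * p) = 0)
    (c : ℤ) :
    genStep (fun s₁ s₂ => rotMat (Real.pi / 4 + g * (s₁ + s₂) ^ p))
        (fun x => if x = c then vec2 (a : ℂ) 0 else 0) =
      fun x => if x = c - 1 then vec2 (a : ℂ) 0 else 0 := by
  have hangle : Real.pi / 4 + g * (‖(a : ℂ)‖ ^ 2 + ‖(0 : ℂ)‖ ^ 2) ^ p = 0 := by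
    rwa [norm_zero, Complex.norm_real, Real.norm_of_nonneg ha.le, zero_pow two_ne_zero, add_zero,
      ← pow_mul]
  rw [genStep, coinApply_ite, vec2_apply_zero, vec2_apply_one, hangle, rotMat_zero,
    applyMat_one, shiftS_ite_vec2_zero_right]

theorem explicit_soliton_general
    (p : ℕ) (g : ℝ) (a : ℝ) (ha : 0 < a)
    (hres : Real.pi/4 + g * a^(2*p) = 0) :
    (∀ t : ℕ,
      genStep (fun s₁ s₂ => rotMat (Real.pi/4 + g*(s₁+s₂)^p))
        (fun x : ℤ => if x = -(t:ℤ) then vec2 (a:ℂ) 0 else 0) =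
      (fun x : ℤ => if x = -((t:ℤ)+1) then vec2 (a:ℂ) 0 else 0)) ∧
    (∀ t : ℕ,
      genEvolve (fun s₁ s₂ => rotMat (Real.pi/4 + g*(s₁+s₂)^p)) t
        (fun x : ℤ => if x = 0 then vec2 (a:ℂ) 0 else 0) =
      (fun x : ℤ => if x = -(t:ℤ) then vec2 (a:ℂ) 0 else 0)) ∧
    (∀ t : ℕ,
      linfNorm (genEvolve (fun s₁ s₂ => rotMat (Real.pi/4 + g*(s₁+s₂)^p)) t
        (fun x : ℤ => if x = 0 then vec2 (a:ℂ) 0 else 0)) = a) := by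
  have hstep := genStep_soliton p g a ha hres
  have hevolve : ∀ t : ℕ,
      genEvolve (fun s₁ s₂ => rotMat (Real.pi/4 + g*(s₁+s₂)^p)) t
        (fun x : ℤ => if x = 0 then vec2 (a:ℂ) 0 else 0) =
      (fun x : ℤ => if x = -(t:ℤ) then vec2 (a:ℂ) 0 else 0) := fun t => by
    simpa [genEvolve] using iterate_apply_of_forall_apply_eq_sub_one _
      (fun c x => if x = c then vec2 (a:ℂ) 0 else 0) hstep 0 t
  refine ⟨fun t => by rw [neg_add']; exact hstep _, hevolve, fun t => ?_⟩
  rw [hevolve, linfNorm_ite, norm_vec2_zero_right, Complex.norm_real, Real.norm_of_nonneg ha.le]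

/-- explicit traveling-wave (soliton) solution `φ(t) = a δ_{1,−t}` of the
nonlinear quantum walk with coin `C(s₁,s₂) = R(π/4 + g(s₁+s₂)^p)`, `π/4 + g a^{2p} = 0`. -/
theorem explicit_soliton
    (p : ℕ) (hp : 1 ≤ p) (g : ℝ) (hg : g < 0) (a : ℝ) (ha : 0 < a)
    (hres : Real.pi/4 + g * a^(2*p) = 0) :
    (∀ t : ℕ,
      genStep (fun s₁ s₂ => rotMat (Real.pi/4 + g*(s₁+s₂)^p))
        (fun x : ℤ => if x = -(t:ℤ) then vec2 (a:ℂ) 0 else 0) =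
      (fun x : ℤ => if x = -((t:ℤ)+1) then vec2 (a:ℂ) 0 else 0)) ∧
    (∀ t : ℕ,
      genEvolve (fun s₁ s₂ => rotMat (Real.pi/4 + g*(s₁+s₂)^p)) t
        (fun x : ℤ => if x = 0 then vec2 (a:ℂ) 0 else 0) =
      (fun x : ℤ => if x = -(t:ℤ) then vec2 (a:ℂ) 0 else 0)) ∧
    (∀ t : ℕ,
      linfNorm (genEvolve (fun s₁ s₂ => rotMat (Real.pi/4 + g*(s₁+s₂)^p)) t
        (fun x : ℤ => if x = 0 then vec2 (a:ℂ) 0 else 0)) = a) :=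
  explicit_soliton_general p g a ha hres
end
end
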